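/- For the variable hard sphere kernel with exponent ν ∈ [0,1], the weighted Laguerre product integral evaluates in closed form: ∫_0^∞ L_{n}^{(l+1/2)}(r) L_{n'}^{(l+1/2)}(r) r^{l+(ν+1)/2} e^{−r} dr = (−1)^{n+n'} Γ(l + 1 + (ν+1)/2) Σ_{k=0}^{min(n,n')} C(ν/2, n−k) C(ν/2, n'−k) C(k + l + (ν+1)/2, k), where C(a, j) denotes the generalized binomial coefficient a(a−1)⋯(a−j+1)/j!. -/

import Mathlib

noncomputable section
open Real MeasureTheory

/-- Generalized binomial coefficient `C(a, j) = a(a-1)⋯(a-j+1)/j!`. -/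
def genBinom (a : ℝ) (j : ℕ) : ℝ := (∏ i ∈ Finset.range j, (a - i)) / (Nat.factorial j)

/-- The generalized Laguerre polynomial `L_n^{(α)}(x) = Σ_{k=0}^n (-1)^k C(n+α, n-k) x^k / k!`. -/
def laguerre (α : ℝ) (n : ℕ) (x : ℝ) : ℝ :=
  ∑ k ∈ Finset.range (n + 1),
    (-1 : ℝ) ^ k * genBinom ((n : ℝ) + α) (n - k) * x ^ k / (Nat.factorial k)

/-! Expanding `L_n^{(α)}` in monomials reduces the integral to Gamma values. Since
`(-1)^k Γ(s+k)/k! = Γ(s) C(-s, k)`, Chu–Vandermonde gives the Mellin transform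
`∫₀^∞ L_n^{(α)}(r) r^{s-1} e^{-r} dr = Γ(s) C(n+α-s, n)`. Applied to `L_{n'}^{(α)}` against the
monomials `r^j` of `L_n^{(α)}`, with weight `r^{α+u}` (here `α = l+1/2`, `u = ν/2`), it yields
`C(n'-u-j-1, n') = (-1)^{n'} C(u+j, n') = (-1)^{n'} Σ_k C(j,k) C(u, n'-k)` by upper negation and
Vandermonde again. Multiplying the coefficients of `L_n^{(α)}` by `C(j, k)` gives, up to
`(-1)^k/k!`, those of `L_{n-k}^{(α+k)}` (the `k`-th derivative), so each inner sum over `j` is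
another Mellin transform, equal to `(-1)^n Γ(α+u+1) C(u, n-k) C(k+α+u, k)`. -/

open Finset
open scoped Nat

theorem genBinom_eq_choose (a : ℝ) (j : ℕ) : genBinom a j = Ring.choose a j := by
  rw [Ring.choose_eq_smul, ← Polynomial.aeval_eq_smeval, Polynomial.aeval_def,
    Polynomial.eval₂_eq_eval_map, descPochhammer_map, descPochhammer_eval_eq_prod_range,
    genBinom, smul_eq_mul, div_eq_inv_mul]

theorem negOnePow_smul_eq_neg_one_pow_mul (k : ℕ) (x : ℝ) :
    (k : ℤ).negOnePow • x = (-1) ^ k * x := by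
  rw [Units.smul_def, Int.coe_negOnePow_natCast, zsmul_eq_mul]
  push_cast
  rfl

theorem choose_neg_eq_neg_one_pow_mul_multichoose (s : ℝ) (k : ℕ) :
    Ring.choose (-s) k = (-1) ^ k * Ring.multichoose s k := by
  rw [Ring.choose_neg', negOnePow_smul_eq_neg_one_pow_mul]

theorem choose_natCast_sub_sub_one (u : ℝ) (m : ℕ) :
    Ring.choose ((m : ℝ) - u - 1) m = (-1) ^ m * Ring.choose u m := by
  have h := Ring.choose_neg (u - m + 1) m
  rwa [neg_add', neg_sub, show u - m + 1 + m - 1 = u by ring,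
    negOnePow_smul_eq_neg_one_pow_mul] at h

theorem choose_natCast_sub_add_sub_one_eq_sum (u : ℝ) (j m : ℕ) :
    Ring.choose ((m : ℝ) - (u + j) - 1) m
      = (-1) ^ m * ∑ i ∈ range (m + 1), (j.choose i : ℝ) * Ring.choose u (m - i) := by
  rw [choose_natCast_sub_sub_one, add_comm u, Ring.add_choose_eq m (Commute.all _ _),
    Nat.sum_antidiagonal_eq_sum_range_succ_mk]
  simp only [Ring.choose_natCast]

theorem Real.Gamma_add_nat_eq_mul_ascPochhammer {s : ℝ} (hs : 0 < s) (k : ℕ) :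
    Gamma (s + k) = Gamma s * (ascPochhammer ℝ k).eval s := by
  induction k with
  | zero => simp
  | succ k ih =>
    rw [Nat.cast_succ, ← add_assoc, Gamma_add_one (by positivity), ih, ascPochhammer_succ_eval]
    ring

theorem Real.Gamma_add_nat_eq_mul_factorial_mul_multichoose {s : ℝ} (hs : 0 < s) (k : ℕ) :
    Gamma (s + k) = Gamma s * (k ! * Ring.multichoose s k) := by
  rw [Gamma_add_nat_eq_mul_ascPochhammer hs, ← Polynomial.ascPochhammer_smeval_eq_eval,
    ← Ring.factorial_nsmul_multichoose_eq_ascPochhammer, nsmul_eq_mul]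

theorem integrableOn_rpow_mul_exp_neg {c : ℝ} (hc : -1 < c) :
    IntegrableOn (fun r => r ^ c * exp (-r)) (Set.Ioi 0) := by
  simpa [mul_comm] using GammaIntegral_convergent (s := c + 1) (by linarith)

theorem integral_rpow_mul_exp_neg {c : ℝ} (hc : -1 < c) :
    ∫ r in Set.Ioi 0, r ^ c * exp (-r) = Gamma (c + 1) := by
  simp [Gamma_eq_integral (s := c + 1) (by linarith), mul_comm]

def laguerreCoeff (α : ℝ) (n k : ℕ) : ℝ := (-1) ^ k * Ring.choose (n + α) (n - k) / k !

theorem laguerre_eq_sum (α : ℝ) (n : ℕ) (x : ℝ) :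
    laguerre α n x = ∑ k ∈ range (n + 1), laguerreCoeff α n k * x ^ k := by
  refine sum_congr rfl fun k _ => ?_
  rw [laguerreCoeff, genBinom_eq_choose]
  ring

theorem laguerreCoeff_add_mul_choose (α : ℝ) {n i : ℕ} (hi : i ≤ n) (t : ℕ) :
    laguerreCoeff α n (i + t) * (i + t).choose i
      = (-1) ^ i / i ! * laguerreCoeff (α + i) (n - i) t := by
  have hfact : ((i + t).choose i : ℝ) * i ! * t ! = (i + t)! := by
    exact_mod_cast Nat.choose_symm_add ▸ Nat.add_choose_mul_factorial_mul_factorial i t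
  have hchoose : ((i + t).choose i : ℝ) ≠ 0 := by exact_mod_cast (Nat.choose_pos (by omega)).ne'
  rw [laguerreCoeff, laguerreCoeff, Nat.cast_sub hi, show n - (i + t) = n - i - t by omega,
    show (n : ℝ) - i + (α + i) = n + α by ring, ← hfact, pow_add]
  field_simp

theorem sum_laguerreCoeff_mul_Gamma_add_nat (α : ℝ) (n : ℕ) {s : ℝ} (hs : 0 < s) :
    ∑ k ∈ range (n + 1), laguerreCoeff α n k * Gamma (s + k)
      = Gamma s * Ring.choose (n + α - s) n := by
  have hterm (k : ℕ) : laguerreCoeff α n k * Gamma (s + k)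
      = Gamma s * (Ring.choose (-s) k * Ring.choose (n + α) (n - k)) := by
    rw [laguerreCoeff, Gamma_add_nat_eq_mul_factorial_mul_multichoose hs,
      choose_neg_eq_neg_one_pow_mul_multichoose]
    field_simp
  rw [sum_congr rfl fun k _ => hterm k, ← mul_sum, sub_eq_neg_add,
    Ring.add_choose_eq n (Commute.all _ _), Nat.sum_antidiagonal_eq_sum_range_succ_mk]

theorem sum_laguerreCoeff_mul_choose_mul_Gamma_add_nat (α : ℝ) {n i : ℕ} (hi : i ≤ n) {s : ℝ}
    (hs : 0 < s) :
    ∑ j ∈ range (n + 1), laguerreCoeff α n j * j.choose i * Gamma (s + j)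
      = (-1) ^ i / i ! * Gamma (s + i) * Ring.choose (n + α - s - i) (n - i) := by
  have hsplit : n + 1 = i + (n - i + 1) := by omega
  have hlow : ∑ j ∈ range i, laguerreCoeff α n j * j.choose i * Gamma (s + j) = 0 :=
    sum_eq_zero fun j hj => by rw [Nat.choose_eq_zero_of_lt (mem_range.mp hj)]; simp
  have hhigh (t : ℕ) : laguerreCoeff α n (i + t) * (i + t).choose i * Gamma (s + (i + t : ℕ))
      = (-1) ^ i / i ! * (laguerreCoeff (α + i) (n - i) t * Gamma (s + i + t)) := by
    rw [laguerreCoeff_add_mul_choose α hi, Nat.cast_add, add_assoc]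
    ring
  rw [hsplit, sum_range_add, hlow, zero_add, sum_congr rfl fun t _ => hhigh t, ← mul_sum,
    sum_laguerreCoeff_mul_Gamma_add_nat _ _ (by positivity), Nat.cast_sub hi,
    show (n : ℝ) - i + (α + i) - (s + i) = n + α - s - i by ring, mul_assoc]

theorem sum_laguerreCoeff_mul_choose_mul_Gamma_eq_choose_mul_choose (α u : ℝ) {n i : ℕ}
    (hi : i ≤ n) (hs : 0 < α + u + 1) :
    ∑ j ∈ range (n + 1), laguerreCoeff α n j * j.choose i * Gamma (α + u + 1 + j)
      = (-1) ^ n * Gamma (α + u + 1) * (Ring.choose u (n - i) * Ring.choose (i + (α + u)) i) := by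
  rw [sum_laguerreCoeff_mul_choose_mul_Gamma_add_nat α hi hs,
    Gamma_add_nat_eq_mul_factorial_mul_multichoose hs, Ring.multichoose_eq,
    show (n : ℝ) + α - (α + u + 1) - i = ((n - i : ℕ) : ℝ) - u - 1 by
      rw [Nat.cast_sub hi]; ring,
    choose_natCast_sub_sub_one, show α + u + 1 + i - 1 = i + (α + u) by ring,
    ← pow_sub_mul_pow (-1 : ℝ) hi]
  field_simp

theorem sum_laguerreCoeff_mul_Gamma_mul_choose (α u : ℝ) (n n' : ℕ) (hs : 0 < α + u + 1) :
    ∑ j ∈ range (n + 1),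
        laguerreCoeff α n j * (Gamma (α + u + j + 1) * Ring.choose (n' + α - (α + u + j + 1)) n')
      = (-1) ^ (n + n') * Gamma (α + u + 1) * ∑ k ∈ range (min n n' + 1),
          Ring.choose u (n - k) * Ring.choose u (n' - k) * Ring.choose (k + (α + u)) k := by
  have hvanish : ∀ i ∈ range (n' + 1), i ∉ range (min n n' + 1) →
      Ring.choose u (n' - i) *
        ∑ j ∈ range (n + 1), laguerreCoeff α n j * j.choose i * Gamma (α + u + 1 + j) = 0 := by
    intro i hi' hi
    refine mul_eq_zero_of_right _ (sum_eq_zero fun j hj => ?_)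
    rw [Nat.choose_eq_zero_of_lt (by simp at hi' hi hj; omega), Nat.cast_zero, mul_zero, zero_mul]
  calc ∑ j ∈ range (n + 1),
        laguerreCoeff α n j * (Gamma (α + u + j + 1) * Ring.choose (n' + α - (α + u + j + 1)) n')
      = (-1) ^ n' * ∑ i ∈ range (n' + 1), Ring.choose u (n' - i) *
          ∑ j ∈ range (n + 1), laguerreCoeff α n j * j.choose i * Gamma (α + u + 1 + j) := by
        simp only [show ∀ j : ℕ, (n' : ℝ) + α - (α + u + j + 1) = n' - (u + j) - 1 by
          intro j; ring, choose_natCast_sub_add_sub_one_eq_sum, mul_sum]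
        rw [sum_comm]
        refine sum_congr rfl fun i _ => sum_congr rfl fun j _ => ?_
        ring_nf
    _ = (-1) ^ n' * ∑ i ∈ range (min n n' + 1), Ring.choose u (n' - i) *
          ∑ j ∈ range (n + 1), laguerreCoeff α n j * j.choose i * Gamma (α + u + 1 + j) := by
        rw [sum_subset (range_subset_range.mpr (by omega)) hvanish]
    _ = _ := by
        rw [sum_congr rfl fun i hi => by
          rw [sum_laguerreCoeff_mul_choose_mul_Gamma_eq_choose_mul_choose α u
            (by simp at hi; omega) hs]]
        simp only [mul_sum, pow_add]
        refine sum_congr rfl fun i _ => ?_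
        ring

theorem laguerre_mul_rpow_eqOn (α c : ℝ) (n : ℕ) :
    Set.EqOn (fun r => laguerre α n r * r ^ c)
      (fun r => ∑ k ∈ range (n + 1), laguerreCoeff α n k * r ^ (c + k)) (Set.Ioi 0) := by
  intro r hr
  simp only [laguerre_eq_sum, sum_mul, mul_assoc]
  refine sum_congr rfl fun k _ => ?_
  rw [rpow_add hr, rpow_natCast, mul_comm (r ^ c)]

theorem laguerre_mul_rpow_mul_exp_eqOn (α c : ℝ) (n : ℕ) :
    Set.EqOn (fun r => laguerre α n r * r ^ c * exp (-r))
      (fun r => ∑ k ∈ range (n + 1), laguerreCoeff α n k * (r ^ (c + k) * exp (-r)))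
      (Set.Ioi 0) := by
  intro r hr
  simp only [laguerre_mul_rpow_eqOn α c n hr, sum_mul, mul_assoc]

theorem integrableOn_laguerre_mul_rpow_mul_exp (α : ℝ) (n : ℕ) {c : ℝ} (hc : -1 < c) :
    IntegrableOn (fun r => laguerre α n r * r ^ c * exp (-r)) (Set.Ioi 0) := by
  refine IntegrableOn.congr_fun (integrable_finsetSum _ fun k _ => ?_)
    (laguerre_mul_rpow_mul_exp_eqOn α c n).symm measurableSet_Ioi
  exact (integrableOn_rpow_mul_exp_neg (by linarith [k.cast_nonneg' (α := ℝ)])).const_mul _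

theorem integral_laguerre_mul_rpow_mul_exp (α : ℝ) (n : ℕ) {c : ℝ} (hc : -1 < c) :
    ∫ r in Set.Ioi 0, laguerre α n r * r ^ c * exp (-r)
      = Gamma (c + 1) * Ring.choose (n + α - (c + 1)) n := by
  rw [setIntegral_congr_fun measurableSet_Ioi (laguerre_mul_rpow_mul_exp_eqOn α c n),
    integral_finsetSum _ fun k _ =>
      (integrableOn_rpow_mul_exp_neg (by linarith [k.cast_nonneg' (α := ℝ)])).const_mul _,
    ← sum_laguerreCoeff_mul_Gamma_add_nat α n (by linarith)]
  refine sum_congr rfl fun k _ => ?_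
  rw [integral_const_mul, integral_rpow_mul_exp_neg (by linarith [k.cast_nonneg' (α := ℝ)]),
    add_right_comm]

theorem integral_laguerre_mul_laguerre_mul_rpow_mul_exp {α u : ℝ} (h : -1 < α + u) (n n' : ℕ) :
    ∫ r in Set.Ioi 0, laguerre α n r * laguerre α n' r * r ^ (α + u) * exp (-r)
      = (-1) ^ (n + n') * Gamma (α + u + 1) * ∑ k ∈ range (min n n' + 1),
          Ring.choose u (n - k) * Ring.choose u (n' - k) * Ring.choose (k + (α + u)) k := by
  have hexp (j : ℕ) : -1 < α + u + j := by linarith [j.cast_nonneg' (α := ℝ)]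
  have hexpand : Set.EqOn (fun r => laguerre α n r * laguerre α n' r * r ^ (α + u) * exp (-r))
      (fun r => ∑ j ∈ range (n + 1),
        laguerreCoeff α n j * (laguerre α n' r * r ^ (α + u + j) * exp (-r))) (Set.Ioi 0) := by
    intro r hr
    have hn := laguerre_mul_rpow_eqOn α (α + u) n hr
    dsimp only at hn ⊢
    rw [mul_right_comm (laguerre α n r), hn, sum_mul, sum_mul]
    refine sum_congr rfl fun j _ => ?_
    ring
  rw [setIntegral_congr_fun measurableSet_Ioi hexpand, integral_finsetSum _ fun j _ =>
      (integrableOn_laguerre_mul_rpow_mul_exp α n' (hexp j)).const_mul _,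
    ← sum_laguerreCoeff_mul_Gamma_mul_choose α u n n' (by linarith)]
  simp only [integral_const_mul, integral_laguerre_mul_rpow_mul_exp α n' (hexp _)]

/-- closed form of the weighted Laguerre product integral for the
variable-hard-sphere exponent `ν ∈ [0,1]`:
`∫₀^∞ L_n^{(l+1/2)}(r) L_{n'}^{(l+1/2)}(r) r^{l+(ν+1)/2} e^{−r} dr
  = (−1)^{n+n'} Γ(l+1+(ν+1)/2) Σ_{k=0}^{min(n,n')} C(ν/2, n−k) C(ν/2, n'−k) C(k+l+(ν+1)/2, k)`. -/
theorem laguerre_vhs_integral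
    (l n n' : ℕ) (ν : ℝ) (hν : ν ∈ Set.Icc (0 : ℝ) 1) :
    ∫ r in Set.Ioi (0 : ℝ),
        laguerre ((l : ℝ) + 1 / 2) n r * laguerre ((l : ℝ) + 1 / 2) n' r *
          r ^ ((l : ℝ) + (ν + 1) / 2) * Real.exp (-r)
      = (-1 : ℝ) ^ (n + n') * Real.Gamma ((l : ℝ) + 1 + (ν + 1) / 2) *
          ∑ k ∈ Finset.range (min n n' + 1),
            genBinom (ν / 2) (n - k) * genBinom (ν / 2) (n' - k) *
              genBinom ((k : ℝ) + l + (ν + 1) / 2) k := by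
  have hb : (l : ℝ) + (ν + 1) / 2 = (l + 1 / 2) + ν / 2 := by ring
  rw [hb, integral_laguerre_mul_laguerre_mul_rpow_mul_exp
      (by linarith [hν.1, l.cast_nonneg' (α := ℝ)]),
    show (l : ℝ) + 1 + (ν + 1) / 2 = (l + 1 / 2) + ν / 2 + 1 by ring]
  simp only [genBinom_eq_choose, add_assoc, hb]
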